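/- In the Gaussian RDC setting with ρ = θ₁/(σₛσₓ) and C satisfying (1/2)log(1−ρ²)+h(S) ≤ C ≤ h(S), the choice σ_x̂² = θ₂ = σₓ²·(1/ρ²)(1 − e^{−2h(S)+2C}) and μ_x̂ = μₓ achieves I(X;X̂) = −(1/2)log(1 − (1/ρ²)(1 − e^{−2h(S)+2C})), H(S|X̂) = C, and E[(X−X̂)²] = σₓ²(1 − (1/ρ²)(1 − e^{−2h(S)+2C})). Hence for any D strictly greater than this value, the distortion constraint is inactive at the optimum. -/
import Mathlib


/-- Differential entropy (nats) of a Gaussian with variance `v`. -/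
noncomputable def gEnt (v : ℝ) : ℝ := (1 / 2) * Real.log (2 * Real.pi * Real.exp 1 * v)

/-- Mutual information (nats) between jointly Gaussian variables with variances
`vx`, `vy` and covariance `c`. -/
noncomputable def gMI (vx vy c : ℝ) : ℝ := -((1 / 2) * Real.log (1 - c ^ 2 / (vx * vy)))

/-- achievability in the Gaussian RDC problem.  For
`(1/2)log(1-ρ²)+h(S) ≤ C ≤ h(S)`, the choice `σ_x̂² = θ₂ = σₓ²(1/ρ²)(1-e^{-2h(S)+2C})`,
`μ_x̂ = μₓ` achieves `I(X;X̂) = -(1/2)log(1-κ)`, `H(S|X̂) = C` and MSE distortion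
`σₓ²(1-κ)`; hence for any `D` strictly larger the distortion constraint is inactive. -/
theorem stmt17 (μx μs σx σs θ₁ C : ℝ)
    (hσx : 0 < σx) (hσs : 0 < σs) (hθ : θ₁ ≠ 0) (hρ : θ₁ ^ 2 < σs ^ 2 * σx ^ 2)
    (hC1 : (1 / 2) * Real.log (1 - (θ₁ / (σs * σx)) ^ 2) + gEnt (σs ^ 2) ≤ C)
    (hC2 : C ≤ gEnt (σs ^ 2)) :
    let hS : ℝ := gEnt (σs ^ 2)
    let κ : ℝ := (1 / (θ₁ / (σs * σx)) ^ 2) * (1 - Real.exp (-2 * hS + 2 * C))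
    let v : ℝ := σx ^ 2 * κ
    gMI (σx ^ 2) v v = -((1 / 2) * Real.log (1 - κ)) ∧
    hS - gMI (σs ^ 2) v (θ₁ * v / σx ^ 2) = C ∧
    (μx - μx) ^ 2 + σx ^ 2 + v - 2 * v = σx ^ 2 * (1 - κ) ∧
    (∀ D : ℝ, σx ^ 2 * (1 - κ) < D → (μx - μx) ^ 2 + σx ^ 2 + v - 2 * v < D) := by
  intro hS κ v
  have hρ2 : (0:ℝ) < (θ₁ / (σs * σx)) ^ 2 := by positivity
  have hρ2ne : ((θ₁ / (σs * σx)) ^ 2) ≠ 0 := ne_of_gt hρ2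
  have hσx2 : (σx:ℝ) ^ 2 ≠ 0 := by positivity
  have hσs2 : (σs:ℝ) ^ 2 ≠ 0 := by positivity
  have hEdef : Real.log (Real.exp (-2 * hS + 2 * C)) = -2 * hS + 2 * C := Real.log_exp _
  have hκdef : κ = (1 / (θ₁ / (σs * σx)) ^ 2) * (1 - Real.exp (-2 * hS + 2 * C)) := rfl
  have hvdef : v = σx ^ 2 * κ := rfl
  have hκρ : κ * (θ₁ / (σs * σx)) ^ 2 = 1 - Real.exp (-2 * hS + 2 * C) := by
    rw [hκdef]; field_simp
  have hkey : 1 - (θ₁ * v / σx ^ 2) ^ 2 / (σs ^ 2 * v) = Real.exp (-2 * hS + 2 * C) := by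
    rcases eq_or_ne κ 0 with hk | hk
    · have h0 : 1 - Real.exp (-2 * hS + 2 * C) = 0 := by
        rw [← hκρ, hk]; ring
      rw [hvdef, hk]
      simp [sub_eq_zero.mp (by linarith [h0] : (1:ℝ) - Real.exp (-2*hS+2*C) = 0)]
    · have hv : v ≠ 0 := by rw [hvdef]; exact mul_ne_zero hσx2 hk
      have : (θ₁ * v / σx ^ 2) ^ 2 / (σs ^ 2 * v) = κ * (θ₁ / (σs * σx)) ^ 2 := by
        rw [hvdef]; field_simp
      rw [this, hκρ]; ring
  refine ⟨?_, ?_, ?_, ?_⟩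
  · have : v ^ 2 / (σx ^ 2 * v) = κ := by
      rcases eq_or_ne κ 0 with hk | hk
      · rw [hvdef, hk]; simp
      · have hv : v ≠ 0 := by rw [hvdef]; exact mul_ne_zero hσx2 hk
        rw [hvdef]; field_simp
    rw [gMI, this]
  · rw [gMI, hkey, hEdef]; ring
  · rw [hvdef]; ring
  · intro D hD
    have h3 : (μx - μx) ^ 2 + σx ^ 2 + v - 2 * v = σx ^ 2 * (1 - κ) := by
      rw [hvdef]; ring
    linarith
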